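/- arXiv:1901.08788 — 6 statements merged into one kernel-verified Lean document; each statement's English description precedes it below -/
import Mathlib

section
/- Let f: ℝ^p → ℝ be L-smooth and μ-strongly convex, and let β ∈ [0, μ]. Then for all x, y in ℝ^p, ‖∇f(x) - ∇f(y) - β(x - y)‖² ≤ 2L (f(x) - f(y) - ⟨∇f(y), x - y⟩). -/
/-!
Put `w = ∇f x - ∇f y - β (x - y)` and `u = x - w / L`. Strong convexity (with modulus `β ≤ μ`)
bounds `f u` from below by a quadratic model at `y`, and the Lipschitz gradient bounds it from
above by a quadratic model at `x`. Comparing the two models at this particular `u` leaves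
`‖w‖² / (2L) + (β / 2) ‖x - y‖² + (β / 2L²) ‖w‖²` below the Bregman gap
`f x - f y - ⟪∇f y, x - y⟫`.
-/

open RealInnerProductSpace Set Filter Topology

section QuadraticBounds

variable {F : Type*} [NormedAddCommGroup F] [InnerProductSpace ℝ F] {f : F → ℝ}

theorem norm_sub_sub_smul_sq_le_of_quadratic_bounds {f' : F → F} {β L : ℝ} {x y : F}
    (hβ : 0 ≤ β) (hL : 0 < L)
    (hlower : ∀ u, f y + ⟪f' y, u - y⟫ + β / 2 * ‖u - y‖ ^ 2 ≤ f u)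
    (hupper : ∀ u, f u ≤ f x + ⟪f' x, u - x⟫ + L / 2 * ‖u - x‖ ^ 2) :
    ‖f' x - f' y - β • (x - y)‖ ^ 2 ≤ 2 * L * (f x - f y - ⟪f' y, x - y⟫) := by
  set w := f' x - f' y - β • (x - y)
  set u := x - L⁻¹ • w
  have hlow := hlower u
  have hup := hupper u
  have hux : u - x = -(L⁻¹ • w) := by simp only [u]; abel
  have huy : u - y = (x - y) - L⁻¹ • w := by simp only [u]; abel
  have hinner_y : ⟪f' y, u - y⟫ = ⟪f' y, x - y⟫ - L⁻¹ * ⟪f' y, w⟫ := by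
    rw [huy, inner_sub_right, real_inner_smul_right]
  have hinner_x : ⟪f' x, u - x⟫ = -(L⁻¹ * ⟪f' x, w⟫) := by
    rw [hux, inner_neg_right, real_inner_smul_right]
  have hnorm_y : ‖u - y‖ ^ 2 = ‖x - y‖ ^ 2 - 2 * L⁻¹ * ⟪x - y, w⟫ + L⁻¹ ^ 2 * ‖w‖ ^ 2 := by
    rw [huy, norm_sub_sq_real, real_inner_smul_right, norm_smul,
      Real.norm_of_nonneg (by positivity)]
    ring
  have hnorm_x : L / 2 * ‖u - x‖ ^ 2 = L⁻¹ / 2 * ‖w‖ ^ 2 := by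
    rw [hux, norm_neg, norm_smul, Real.norm_of_nonneg (by positivity)]
    field_simp
  have hgrad_gap : ⟪f' x, w⟫ - ⟪f' y, w⟫ = ‖w‖ ^ 2 + β * ⟪x - y, w⟫ := by
    rw [← inner_sub_left, show f' x - f' y = w + β • (x - y) by simp only [w]; abel,
      inner_add_left, real_inner_self_eq_norm_sq, real_inner_smul_left]
  rw [hinner_y, hnorm_y] at hlow
  rw [hinner_x, hnorm_x] at hup
  have key : L⁻¹ * ‖w‖ ^ 2 ≤ 2 * (f x - f y - ⟪f' y, x - y⟫) := by
    linarith [congrArg (L⁻¹ * ·) hgrad_gap, mul_nonneg hβ (sq_nonneg ‖x - y‖),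
      mul_nonneg hβ (mul_nonneg (sq_nonneg L⁻¹) (sq_nonneg ‖w‖))]
  calc ‖w‖ ^ 2 = L * (L⁻¹ * ‖w‖ ^ 2) := by rw [← mul_assoc, mul_inv_cancel₀ hL.ne', one_mul]
    _ ≤ 2 * L * (f x - f y - ⟪f' y, x - y⟫) := by
      linarith [mul_le_mul_of_nonneg_left key hL.le]

variable [CompleteSpace F]

theorem HasGradientAt.hasDerivAt_add_smul {f' x d : F} {t : ℝ}
    (h : HasGradientAt f f' (x + t • d)) :
    HasDerivAt (fun s : ℝ => f (x + s • d)) ⟪f', d⟫ t := by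
  have hline : HasDerivAt (fun s : ℝ => x + s • d) d t := by
    simpa using ((hasDerivAt_id t).smul_const d).const_add x
  exact (hasGradientAt_iff_hasFDerivAt.mp h).comp_hasDerivAt t hline

theorem StrongConvexOn.add_inner_add_le_of_hasGradientAt {s : Set F} {m : ℝ} {f' x y : F}
    (hf : StrongConvexOn s m f) (hx : x ∈ s) (hy : y ∈ s) (h : HasGradientAt f f' x) :
    f x + ⟪f', y - x⟫ + m / 2 * ‖y - x‖ ^ 2 ≤ f y := by
  set φ : ℝ → ℝ := fun t => f (x + t • (y - x))
  have hderiv : HasDerivAt φ ⟪f', y - x⟫ 0 :=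
    HasGradientAt.hasDerivAt_add_smul (by simpa using h)
  have hslope : Tendsto (slope φ 0) (𝓝[>] 0) (𝓝 ⟪f', y - x⟫) :=
    (hasDerivAt_iff_tendsto_slope.mp hderiv).mono_left
      (nhdsWithin_mono _ fun t ht => ne_of_gt ht)
  have hbound : Tendsto (fun t : ℝ => f y - f x - (1 - t) * (m / 2 * ‖y - x‖ ^ 2)) (𝓝[>] 0)
      (𝓝 (f y - f x - m / 2 * ‖y - x‖ ^ 2)) := by
    have hcont : Continuous fun t : ℝ => f y - f x - (1 - t) * (m / 2 * ‖y - x‖ ^ 2) := by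
      fun_prop
    simpa using tendsto_nhdsWithin_of_tendsto_nhds (hcont.tendsto 0)
  suffices ∀ᶠ t in 𝓝[>] 0, slope φ 0 t ≤ f y - f x - (1 - t) * (m / 2 * ‖y - x‖ ^ 2) by
    linarith [le_of_tendsto_of_tendsto hslope hbound this]
  filter_upwards [Ioc_mem_nhdsGT (zero_lt_one' ℝ)] with t ⟨ht0, ht1⟩
  have hconv := hf.2 hx hy (sub_nonneg.mpr ht1) ht0.le (sub_add_cancel 1 t)
  have hpoint : (1 - t) • x + t • y = x + t • (y - x) := by module
  rw [hpoint, norm_sub_rev] at hconv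
  rw [slope_def_field, sub_zero, div_le_iff₀ ht0]
  simp only [φ, zero_smul, add_zero, smul_eq_mul] at hconv ⊢
  nlinarith

theorem LipschitzWith.le_add_inner_add_of_hasGradientAt {f' : F → F} {K : NNReal}
    (hK : LipschitzWith K f') (hf : ∀ z, HasGradientAt f (f' z) z) (x y : F) :
    f y ≤ f x + ⟪f' x, y - x⟫ + K / 2 * ‖y - x‖ ^ 2 := by
  set d := y - x
  set ψ : ℝ → ℝ := fun t => f (x + t • d) - t * ⟪f' x, d⟫ - K / 2 * ‖d‖ ^ 2 * t ^ 2
  have hderiv : ∀ t, HasDerivAt ψ (⟪f' (x + t • d) - f' x, d⟫ - K * ‖d‖ ^ 2 * t) t := by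
    intro t
    refine ((((hf _).hasDerivAt_add_smul).sub ((hasDerivAt_id t).mul_const ⟪f' x, d⟫)).sub
      (((hasDerivAt_id t).pow 2).const_mul (K / 2 * ‖d‖ ^ 2))).congr_deriv ?_
    simp only [inner_sub_left, id]
    ring
  obtain ⟨c, ⟨hc0, -⟩, hc⟩ := exists_hasDerivAt_eq_slope ψ _ zero_lt_one
    (fun t _ => (hderiv t).continuousAt.continuousWithinAt) fun t _ => hderiv t
  have hinner : ⟪f' (x + c • d) - f' x, d⟫ ≤ K * ‖d‖ ^ 2 * c :=
    calc ⟪f' (x + c • d) - f' x, d⟫ ≤ ‖f' (x + c • d) - f' x‖ * ‖d‖ := real_inner_le_norm _ _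
      _ ≤ K * ‖(x + c • d) - x‖ * ‖d‖ := by
          gcongr
          simpa only [dist_eq_norm] using hK.dist_le_mul (x + c • d) x
      _ = K * ‖d‖ ^ 2 * c := by
          rw [add_sub_cancel_left, norm_smul, Real.norm_of_nonneg hc0.le]
          ring
  have hψ : ψ 1 ≤ ψ 0 := by
    rw [sub_zero, div_one] at hc
    linarith
  have hψ1 : ψ 1 = f y - ⟪f' x, d⟫ - K / 2 * ‖d‖ ^ 2 := by simp [ψ, d]
  have hψ0 : ψ 0 = f x := by simp [ψ]
  linarith

end QuadraticBounds

theorem stmt3 {p : ℕ} (f : EuclideanSpace ℝ (Fin p) → ℝ)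
    (f' : EuclideanSpace ℝ (Fin p) → EuclideanSpace ℝ (Fin p)) (L μ β : ℝ)
    (hdiff : ∀ x, HasGradientAt f (f' x) x)
    (hL0 : 0 ≤ L) (hlip : LipschitzWith L.toNNReal f')
    (hconv : ConvexOn ℝ Set.univ (fun x => f x - μ / 2 * ‖x‖ ^ 2))
    (hβ0 : 0 ≤ β) (hβμ : β ≤ μ) (hμL : μ ≤ L) :
    ∀ x y : EuclideanSpace ℝ (Fin p),
      ‖f' x - f' y - β • (x - y)‖ ^ 2
        ≤ 2 * L * (f x - f y - ⟪f' y, x - y⟫) := by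
  intro x y
  rcases hL0.eq_or_lt with rfl | hL
  · obtain rfl : β = 0 := le_antisymm (hβμ.trans hμL) hβ0
    have hconst : f' x = f' y := by
      simpa using hlip.dist_le_mul x y
    simp [hconst]
  have hstrong : StrongConvexOn univ β f :=
    (strongConvexOn_iff_convex.mpr hconv).mono hβμ
  refine norm_sub_sub_smul_sq_le_of_quadratic_bounds hβ0 hL
    (fun u => hstrong.add_inner_add_le_of_hasGradientAt trivial trivial (hdiff y)) fun u => ?_
  simpa [hL0] using hlip.le_add_inner_add_of_hasGradientAt hdiff x u
end

section
/- Fix η > 0, μ ≥ 0, γ_0 ≥ μ. Define recursively γ_k = (1 - δ_k) γ_{k-1} + δ_k μ where δ_k = η γ_k (assume this system admits solutions with δ_k ∈ (0,1)), and set Γ_k = ∏_{t=1}^k (1 - δ_t). Then for all k ≥ 0, Γ_k ≤ min((1 - μη)^k, 1/(1 + γ_0 η k)). -/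
/-!
Subtracting `μ` from the recursion gives `γ_k - μ = (1 - δ_k)(γ_{k-1} - μ)`, so
`γ_k = μ + Γ_k (γ_0 - μ)`. Hence `γ_k ≥ μ`, which bounds every factor `1 - δ_k = 1 - η γ_k`
by `1 - μη`, and `γ_k ≥ γ_0 Γ_k`, i.e. `δ_k ≥ η γ_0 Γ_k`. The latter makes `1 / Γ_k` grow by
at least `η γ_0` per step, which is the second bound.
-/

open Finset

section ProdOneSub

variable {δ : ℕ → ℝ}

lemma prod_Icc_one_sub_nonneg (hδ1 : ∀ k ≥ 1, δ k ≤ 1) (k : ℕ) :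
    0 ≤ ∏ t ∈ Icc 1 k, (1 - δ t) :=
  prod_nonneg fun t ht => sub_nonneg.2 (hδ1 t (mem_Icc.1 ht).1)

lemma prod_Icc_one_sub_le_one (hδ0 : ∀ k ≥ 1, 0 ≤ δ k) (hδ1 : ∀ k ≥ 1, δ k ≤ 1) (k : ℕ) :
    ∏ t ∈ Icc 1 k, (1 - δ t) ≤ 1 :=
  prod_le_one (fun t ht => sub_nonneg.2 (hδ1 t (mem_Icc.1 ht).1))
    fun t ht => sub_le_self 1 (hδ0 t (mem_Icc.1 ht).1)

lemma sub_eq_prod_Icc_one_sub_mul {γ : ℕ → ℝ} {μ : ℝ}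
    (hrec : ∀ k ≥ 1, γ k = (1 - δ k) * γ (k - 1) + δ k * μ) (k : ℕ) :
    γ k - μ = (∏ t ∈ Icc 1 k, (1 - δ t)) * (γ 0 - μ) := by
  induction k with
  | zero => simp
  | succ k ih =>
    rw [prod_Icc_succ_top (by omega), hrec (k + 1) (by omega), Nat.add_sub_cancel]
    linear_combination (1 - δ (k + 1)) * ih

lemma prod_Icc_one_sub_mul_one_add_le_one {c : ℝ} (hδ1 : ∀ k ≥ 1, δ k ≤ 1)
    (hc : ∀ k ≥ 1, c * ∏ t ∈ Icc 1 k, (1 - δ t) ≤ δ k) (k : ℕ) :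
    (∏ t ∈ Icc 1 k, (1 - δ t)) * (1 + c * k) ≤ 1 := by
  induction k with
  | zero => simp
  | succ k ih =>
    have hstep := hc (k + 1) (by omega)
    rw [prod_Icc_succ_top (by omega)] at hstep ⊢
    have hfactor : 0 ≤ 1 - δ (k + 1) := sub_nonneg.2 (hδ1 (k + 1) (by omega))
    push_cast
    nlinarith [mul_le_mul_of_nonneg_left ih hfactor]

end ProdOneSub

theorem stmt7_general (η μ : ℝ) (γ δ : ℕ → ℝ) (hη : 0 < η) (hμ : 0 ≤ μ) (hμγ : μ ≤ γ 0)
    (hδdef : ∀ k ≥ 1, δ k = η * γ k)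
    (hγrec : ∀ k ≥ 1, γ k = (1 - δ k) * γ (k - 1) + δ k * μ)
    (hδ01 : ∀ k ≥ 1, 0 < δ k ∧ δ k < 1) (k : ℕ) :
    ∏ t ∈ Finset.Icc 1 k, (1 - δ t)
      ≤ min ((1 - μ * η) ^ k) (1 / (1 + γ 0 * η * k)) := by
  have hδ0 : ∀ k ≥ 1, 0 ≤ δ k := fun k hk => (hδ01 k hk).1.le
  have hδ1 : ∀ k ≥ 1, δ k ≤ 1 := fun k hk => (hδ01 k hk).2.le
  have hγ := sub_eq_prod_Icc_one_sub_mul hγrec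
  have hγ_ge_μ (n : ℕ) : μ ≤ γ n := by
    nlinarith [hγ n, prod_Icc_one_sub_nonneg hδ1 n]
  have hγ_ge_prod (n : ℕ) : γ 0 * ∏ t ∈ Icc 1 n, (1 - δ t) ≤ γ n := by
    nlinarith [hγ n, prod_Icc_one_sub_le_one hδ0 hδ1 n]
  refine le_min ?_ ?_
  · calc ∏ t ∈ Icc 1 k, (1 - δ t) ≤ ∏ _t ∈ Icc 1 k, (1 - μ * η) :=
          prod_le_prod (fun t ht => sub_nonneg.2 (hδ1 t (mem_Icc.1 ht).1)) fun t ht => by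
            rw [hδdef t (mem_Icc.1 ht).1]
            nlinarith [hγ_ge_μ t]
      _ = (1 - μ * η) ^ k := by simp
  · rw [le_div_iff₀ (by nlinarith [mul_nonneg (hμ.trans hμγ) hη.le])]
    refine prod_Icc_one_sub_mul_one_add_le_one hδ1 (fun n hn => ?_) k
    rw [hδdef n hn, mul_right_comm, mul_comm η]
    exact mul_le_mul_of_nonneg_right (hγ_ge_prod n) hη.le

theorem stmt7 (η μ : ℝ) (γ δ : ℕ → ℝ) (hη : 0 < η) (hμ : 0 ≤ μ) (hμγ : μ ≤ γ 0)
    (hμη : μ * η < 1)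
    (hδdef : ∀ k ≥ 1, δ k = η * γ k)
    (hγrec : ∀ k ≥ 1, γ k = (1 - δ k) * γ (k - 1) + δ k * μ)
    (hδ01 : ∀ k ≥ 1, 0 < δ k ∧ δ k < 1) (k : ℕ) :
    ∏ t ∈ Finset.Icc 1 k, (1 - δ t)
      ≤ min ((1 - μ * η) ^ k) (1 / (1 + γ 0 * η * k)) :=
  stmt7_general η μ γ δ hη hμ hμγ hδdef hγrec hδ01 k
end

section
/- (Averaging lemma, deterministic version) Let F: ℝ^p → ℝ be convex with minimum F*. Suppose sequences (x_k)_{k≥1} in ℝ^p, nonnegative (T_k)_{k≥0}, (β_k)_{k≥1} ≥ 0, (δ_k)_{k≥1} ⊂ (0,1), and α > 0 satisfy (δ_k/α)(F(x_k) - F*) + T_k ≤ (1 - δ_k) T_{k-1} + β_k for all k ≥ 1. Define Γ_k = ∏_{t=1}^k (1-δ_t) and the averages x̂_k = (1 - δ_k) x̂_{k-1} + δ_k x_k for any initial x̂_0. Then for all k ≥ 1: F(x̂_k) - F* + α T_k ≤ Γ_k (F(x̂_0) - F* + α T_0 + α ∑_{t=1}^k β_t/Γ_t). -/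
/-! Jensen's inequality for the averaging step `x̂ₖ = (1 - δₖ) x̂ₖ₋₁ + δₖ xₖ` turns the hypothesis
into the linear recursion `Vₖ ≤ (1 - δₖ) Vₖ₋₁ + α βₖ` for the potential
`Vₖ = F(x̂ₖ) - F* + α Tₖ`; unrolling it gives the bound. -/

open Finset

theorem le_prod_mul_add_sum_of_le_mul_add {V a b : ℕ → ℝ} (ha : ∀ k ≥ 1, 0 < a k)
    (hV : ∀ k ≥ 1, V k ≤ a k * V (k - 1) + b k) (k : ℕ) :
    V k ≤ (∏ t ∈ Icc 1 k, a t) * (V 0 + ∑ t ∈ Icc 1 k, b t / ∏ i ∈ Icc 1 t, a i) := by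
  induction k with
  | zero => simp
  | succ n ih =>
    have hprod_pos : 0 < ∏ i ∈ Icc 1 n, a i := prod_pos fun i hi => ha i (mem_Icc.1 hi).1
    have ha_pos : 0 < a (n + 1) := ha (n + 1) n.succ_pos
    calc V (n + 1) ≤ a (n + 1) * V n + b (n + 1) := hV (n + 1) n.succ_pos
      _ ≤ a (n + 1) * ((∏ t ∈ Icc 1 n, a t) *
            (V 0 + ∑ t ∈ Icc 1 n, b t / ∏ i ∈ Icc 1 t, a i)) + b (n + 1) := by
          gcongr
      _ = _ := by
          rw [prod_Icc_succ_top n.succ_pos, sum_Icc_succ_top n.succ_pos,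
            prod_Icc_succ_top n.succ_pos]
          field_simp
          ring

theorem ConvexOn.sub_add_mul_le_one_sub_mul_add {E : Type*} [AddCommGroup E] [Module ℝ E]
    {F : E → ℝ} (hF : ConvexOn ℝ Set.univ F) {x y : E} {c T T' β δ α : ℝ}
    (hδ₀ : 0 ≤ δ) (hδ₁ : δ ≤ 1) (hα : 0 < α)
    (h : δ / α * (F x - c) + T' ≤ (1 - δ) * T + β) :
    F ((1 - δ) • y + δ • x) - c + α * T' ≤ (1 - δ) * (F y - c + α * T) + α * β := by
  have hjensen : F ((1 - δ) • y + δ • x) ≤ (1 - δ) * F y + δ * F x :=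
    hF.2 (Set.mem_univ _) (Set.mem_univ _) (sub_nonneg.2 hδ₁) hδ₀ (by ring)
  have hscaled : δ * (F x - c) + α * T' ≤ α * ((1 - δ) * T + β) := by
    have := mul_le_mul_of_nonneg_left h hα.le
    rwa [mul_add, ← mul_assoc, mul_div_cancel₀ _ hα.ne'] at this
  linarith

theorem stmt11_general {p : ℕ} (F : EuclideanSpace ℝ (Fin p) → ℝ) (Fstar : ℝ)
    (hF : ConvexOn ℝ Set.univ F)
    (x xhat : ℕ → EuclideanSpace ℝ (Fin p)) (T β δ : ℕ → ℝ) (α : ℝ) (hα : 0 < α)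
    (hδ : ∀ k ≥ 1, 0 < δ k ∧ δ k < 1)
    (hrec : ∀ k ≥ 1, δ k / α * (F (x k) - Fstar) + T k ≤ (1 - δ k) * T (k - 1) + β k)
    (hxhat : ∀ k ≥ 1, xhat k = (1 - δ k) • xhat (k - 1) + δ k • x k)
    (k : ℕ) :
    F (xhat k) - Fstar + α * T k ≤
      (∏ t ∈ Finset.Icc 1 k, (1 - δ t)) *
        (F (xhat 0) - Fstar + α * T 0 +
          α * ∑ t ∈ Finset.Icc 1 k, β t / ∏ i ∈ Finset.Icc 1 t, (1 - δ i)) := by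
  have hstep : ∀ m ≥ 1, F (xhat m) - Fstar + α * T m ≤
      (1 - δ m) * (F (xhat (m - 1)) - Fstar + α * T (m - 1)) + α * β m := fun m hm => by
    rw [hxhat m hm]
    exact hF.sub_add_mul_le_one_sub_mul_add (hδ m hm).1.le (hδ m hm).2.le hα (hrec m hm)
  have hbound := le_prod_mul_add_sum_of_le_mul_add (fun t ht => sub_pos.2 (hδ t ht).2) hstep k
  simpa only [mul_sum, mul_div_assoc] using hbound

theorem stmt11 {p : ℕ} (F : EuclideanSpace ℝ (Fin p) → ℝ) (Fstar : ℝ)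
    (hF : ConvexOn ℝ Set.univ F) (hFstar : ∀ x, Fstar ≤ F x)
    (x xhat : ℕ → EuclideanSpace ℝ (Fin p)) (T β δ : ℕ → ℝ) (α : ℝ) (hα : 0 < α)
    (hT : ∀ k, 0 ≤ T k) (hβ : ∀ k ≥ 1, 0 ≤ β k)
    (hδ : ∀ k ≥ 1, 0 < δ k ∧ δ k < 1)
    (hrec : ∀ k ≥ 1, δ k / α * (F (x k) - Fstar) + T k ≤ (1 - δ k) * T (k - 1) + β k)
    (hxhat : ∀ k ≥ 1, xhat k = (1 - δ k) • xhat (k - 1) + δ k • x k)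
    (k : ℕ) (hk : 1 ≤ k) :
    F (xhat k) - Fstar + α * T k ≤
      (∏ t ∈ Finset.Icc 1 k, (1 - δ t)) *
        (F (xhat 0) - Fstar + α * T 0 +
          α * ∑ t ∈ Finset.Icc 1 k, β t / ∏ i ∈ Finset.Icc 1 t, (1 - δ i)) :=
  stmt11_general F Fstar hF x xhat T β δ α hα hδ hrec hxhat k
end

section
/- (Uniform averaging) Under the assumptions of the averaging lemma with δ_k = 1/(k+1), the uniform average x̂_k = (1/k)∑_{i=1}^k x_i satisfies F(x̂_k) - F* + α T_k ≤ (α/k)(T_0 + ∑_{t=1}^k β_t/Γ_t), where Γ_t = 1/(t+1). -/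
/-!
Multiplying the recursion at step `k` by `k + 1 = 1/δ_k` turns it into
`(F(x_k) - F*)/α + (k+1) T_k ≤ k T_{k-1} + (k+1) β_k`, whose `T`-terms telescope:
summing over `k = 1, …, n` gives `(1/α) ∑ (F(x_i) - F*) + (n+1) T_n ≤ T_0 + ∑ (t+1) β_t`.
Jensen's inequality bounds `F(x̂_n) - F*` by the average of the gaps `F(x_i) - F*`, and
`T_n ≤ (n+1)/n · T_n` absorbs the remaining term.
-/

open Finset

theorem ConvexOn.map_inv_card_smul_sum_le {𝕜 E ι : Type*} [Field 𝕜] [LinearOrder 𝕜]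
    [IsStrictOrderedRing 𝕜] [AddCommGroup E] [Module 𝕜 E] {s : Set E} {f : E → 𝕜}
    (hf : ConvexOn 𝕜 s f) {t : Finset ι} (ht : t.Nonempty) {p : ι → E}
    (hp : ∀ i ∈ t, p i ∈ s) :
    f ((#t : 𝕜)⁻¹ • ∑ i ∈ t, p i) ≤ (#t : 𝕜)⁻¹ * ∑ i ∈ t, f (p i) := by
  have hcard : (#t : 𝕜) ≠ 0 := by exact_mod_cast ht.card_pos.ne'
  have hw : ∑ _i ∈ t, (#t : 𝕜)⁻¹ = 1 := by
    rw [sum_const, nsmul_eq_mul, mul_inv_cancel₀ hcard]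
  simpa only [smul_sum, mul_sum, smul_eq_mul] using
    hf.map_sum_le (fun _ _ => by positivity) hw hp

theorem sum_add_succ_mul_le_of_le_mul_pred {a b T : ℕ → ℝ}
    (h : ∀ k ≥ 1, a k + ((k : ℝ) + 1) * T k ≤ k * T (k - 1) + b k) (n : ℕ) :
    ∑ i ∈ Icc 1 n, a i + ((n : ℝ) + 1) * T n ≤ T 0 + ∑ i ∈ Icc 1 n, b i := by
  induction n with
  | zero => simp
  | succ n ih =>
    have hstep := h (n + 1) n.succ_pos
    rw [Nat.add_sub_cancel] at hstep
    rw [sum_Icc_succ_top n.succ_pos, sum_Icc_succ_top n.succ_pos]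
    push_cast at hstep ⊢
    linarith

theorem stmt12_general {p : ℕ} (F : EuclideanSpace ℝ (Fin p) → ℝ) (Fstar : ℝ)
    (hF : ConvexOn ℝ Set.univ F)
    (x : ℕ → EuclideanSpace ℝ (Fin p)) (T β δ : ℕ → ℝ) (α : ℝ) (hα : 0 < α)
    (hT : ∀ k, 0 ≤ T k)
    (hδdef : ∀ k : ℕ, δ k = 1 / ((k : ℝ) + 1))
    (hrec : ∀ k ≥ 1, δ k / α * (F (x k) - Fstar) + T k ≤ (1 - δ k) * T (k - 1) + β k)
    (k : ℕ) (hk : 1 ≤ k) :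
    F ((1 / (k : ℝ)) • ∑ i ∈ Finset.Icc 1 k, x i) - Fstar + α * T k ≤
      α / (k : ℝ) * (T 0 + ∑ t ∈ Finset.Icc 1 k, β t / (1 / ((t : ℝ) + 1))) := by
  have hscaled : ∀ m ≥ 1, (F (x m) - Fstar) / α + ((m : ℝ) + 1) * T m ≤
      m * T (m - 1) + β m / (1 / ((m : ℝ) + 1)) := by
    intro m hm
    have h := hrec m hm
    rw [hδdef] at h
    have hm1 : (0 : ℝ) < m + 1 := by positivity
    calc (F (x m) - Fstar) / α + ((m : ℝ) + 1) * T m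
        = (m + 1) * (1 / (m + 1) / α * (F (x m) - Fstar) + T m) := by field_simp
      _ ≤ (m + 1) * ((1 - 1 / (m + 1)) * T (m - 1) + β m) := by gcongr
      _ = m * T (m - 1) + β m / (1 / ((m : ℝ) + 1)) := by field_simp; ring
  have hkpos : (0 : ℝ) < k := by exact_mod_cast hk
  have htel : ∑ i ∈ Icc 1 k, F (x i) - k * Fstar + α * ((k + 1) * T k) ≤
      α * (T 0 + ∑ t ∈ Icc 1 k, β t / (1 / ((t : ℝ) + 1))) := by
    have h := sum_add_succ_mul_le_of_le_mul_pred hscaled k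
    rw [← sum_div, sum_sub_distrib, sum_const, Nat.card_Icc, Nat.add_sub_cancel,
      nsmul_eq_mul, div_add' _ _ _ hα.ne', div_le_iff₀ hα] at h
    linarith
  have hjensen : F ((1 / (k : ℝ)) • ∑ i ∈ Icc 1 k, x i) * k ≤ ∑ i ∈ Icc 1 k, F (x i) := by
    have h := hF.map_inv_card_smul_sum_le (nonempty_Icc.mpr hk) (p := x)
      (fun _ _ => Set.mem_univ _)
    rwa [Nat.card_Icc, Nat.add_sub_cancel, ← div_eq_inv_mul, ← one_div, le_div_iff₀ hkpos] at h
  rw [div_mul_eq_mul_div, le_div_iff₀ hkpos]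
  linarith [mul_nonneg hα.le (hT k)]

theorem stmt12 {p : ℕ} (F : EuclideanSpace ℝ (Fin p) → ℝ) (Fstar : ℝ)
    (hF : ConvexOn ℝ Set.univ F) (hFstar : ∀ x, Fstar ≤ F x)
    (x : ℕ → EuclideanSpace ℝ (Fin p)) (T β δ : ℕ → ℝ) (α : ℝ) (hα : 0 < α)
    (hT : ∀ k, 0 ≤ T k) (hβ : ∀ k ≥ 1, 0 ≤ β k)
    (hδdef : ∀ k : ℕ, δ k = 1 / ((k : ℝ) + 1))
    (hrec : ∀ k ≥ 1, δ k / α * (F (x k) - Fstar) + T k ≤ (1 - δ k) * T (k - 1) + β k)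
    (k : ℕ) (hk : 1 ≤ k) :
    F ((1 / (k : ℝ)) • ∑ i ∈ Finset.Icc 1 k, x i) - Fstar + α * T k ≤
      α / (k : ℝ) * (T 0 + ∑ t ∈ Finset.Icc 1 k, β t / (1 / ((t : ℝ) + 1))) :=
  stmt12_general F Fstar hF x T β δ α hα hT hδdef hrec k hk
end

section
/- (Canonical value at a shifted point) With d_k quadratic of the form d_k(x) = d_k* + (γ_k/2)‖x - v_k‖² and d_k = (1-δ_k)d_{k-1} + δ_k l_k as in the accelerated estimate sequence, the following identity holds: d_k* = (1-δ_k)d_{k-1}* + ((1-δ_k)γ_{k-1}(γ_k - (1-δ_k)γ_{k-1})/(2γ_k))‖y - v_{k-1}‖² + δ_k l_k(y) - (δ_k²/(2γ_k))‖g̃‖² + (δ_k(1-δ_k)γ_{k-1}/γ_k)⟨g̃, v_{k-1} - y⟩, where l_k(x) = c + ⟨g̃, x - y⟩ + (μ/2)‖x - y‖², c ∈ ℝ, and d_{k-1}(x) = d_{k-1}* + (γ_{k-1}/2)‖x - v_{k-1}‖². -/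
open RealInnerProductSpace

set_option maxHeartbeats 2000000

theorem stmt16 {p : ℕ} (γkm1 μ δk dkm1star dkstar c : ℝ)
    (gt y vkm1 vk : EuclideanSpace ℝ (Fin p))
    (hγ : 0 < γkm1) (hμ : 0 ≤ μ) (hδ0 : 0 < δk) (hδ1 : δk < 1) :
    let γk := (1 - δk) * γkm1 + δk * μ
    let dkm1 : EuclideanSpace ℝ (Fin p) → ℝ := fun x => dkm1star + γkm1 / 2 * ‖x - vkm1‖ ^ 2
    let lk : EuclideanSpace ℝ (Fin p) → ℝ := fun x => c + ⟪gt, x - y⟫ + μ / 2 * ‖x - y‖ ^ 2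
    let dk : EuclideanSpace ℝ (Fin p) → ℝ := fun x => (1 - δk) * dkm1 x + δk * lk x
    (∀ x, dk x = dkstar + γk / 2 * ‖x - vk‖ ^ 2) →
    dkstar = (1 - δk) * dkm1star
        + (1 - δk) * γkm1 * (γk - (1 - δk) * γkm1) / (2 * γk) * ‖y - vkm1‖ ^ 2
        + δk * lk y - δk ^ 2 / (2 * γk) * ‖gt‖ ^ 2
        + δk * (1 - δk) * γkm1 / γk * ⟪gt, vkm1 - y⟫ := by
  intro γk dkm1 lk dk h
  have hγk : 0 < γk := by
    have h1 : 0 < (1 - δk) * γkm1 := mul_pos (by linarith) hγ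
    have h2 : 0 ≤ δk * μ := mul_nonneg hδ0.le hμ
    simp only [γk]; linarith
  set D : ℝ := (1 - δk) * dkm1star
        + (1 - δk) * γkm1 * (γk - (1 - δk) * γkm1) / (2 * γk) * ‖y - vkm1‖ ^ 2
        + δk * lk y - δk ^ 2 / (2 * γk) * ‖gt‖ ^ 2
        + δk * (1 - δk) * γkm1 / γk * ⟪gt, vkm1 - y⟫ with hD
  set w : EuclideanSpace ℝ (Fin p) :=
    ((1 - δk) * γkm1 / γk) • vkm1 + ((δk * μ) / γk) • y - (δk / γk) • gt with hw
  have key : ∀ x, dk x = D + γk / 2 * ‖x - w‖ ^ 2 := by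
    intro x
    have e : ∀ a b : EuclideanSpace ℝ (Fin p),
        ‖a - b‖ ^ 2 = ⟪a, a⟫ - 2 * ⟪a, b⟫ + ⟪b, b⟫ := by
      intro a b
      rw [norm_sub_sq_real, real_inner_self_eq_norm_sq, real_inner_self_eq_norm_sq]
    have e2 : ∀ a : EuclideanSpace ℝ (Fin p), ‖a‖ ^ 2 = ⟪a, a⟫ := fun a =>
      (real_inner_self_eq_norm_sq a).symm
    simp only [dk, dkm1, lk, hD, hw, e, e2, inner_add_left, inner_add_right,
      inner_sub_left, inner_sub_right, real_inner_smul_left, real_inner_smul_right]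
    rw [real_inner_comm vkm1 x, real_inner_comm y x, real_inner_comm gt x,
      real_inner_comm vkm1 y, real_inner_comm gt y, real_inner_comm gt vkm1]
    have hγμ : γk = (1 - δk) * γkm1 + δk * μ := rfl
    have hne : (1 - δk) * γkm1 + δk * μ ≠ 0 := ne_of_gt hγk
    rw [hγμ]
    field_simp
    ring
  have h1 := h w
  have h2 := h vk
  have k1 := key w
  have k2 := key vk
  rw [h1] at k1
  rw [h2] at k2
  simp only [sub_self, norm_zero] at k1 k2
  norm_num at k1 k2
  rw [norm_sub_rev w vk] at k1
  generalize hX : γk / 2 * ‖vk - w‖ ^ 2 = X at k1 k2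
  linarith
end

section
/- (Prox–SGD one-step bound, deterministic specialization) Let f be L-smooth and convex, ψ convex lsc, F = f + ψ. For 0 < η ≤ 1/L, let x_+ = Prox_{ηψ}[y - η ∇f(y)] and write g̃ = (y - x_+)/η. Then F(x_+) ≤ f(y) + ⟨g̃ - ψ'(x_+), x_+ - y⟩ + (L/2)‖x_+ - y‖² + ψ(x_+) ≤ l(y) + (Lη²/2 - η)‖g̃‖², where ψ'(x_+) = g̃ - ∇f(y) ∈ ∂ψ(x_+) and l(y) = f(y) + ψ(x_+) + ⟨ψ'(x_+), y - x_+⟩. -/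
/-!
The first inequality is the descent lemma for the `L`-smooth `f`: the slope of `f` along the
segment from `y` to `x₊` exceeds its initial value `⟪∇f(y), x₊ - y⟫` by at most `L t ‖x₊ - y‖²`
at time `t`, which integrates to `L/2 ‖x₊ - y‖²`; moreover `g̃ - ψ'(x₊) = ∇f(y)`.
The second inequality is in fact an identity once `x₊ - y = -η g̃` is substituted.
-/

open RealInnerProductSpace

theorem le_add_deriv_add_half_of_deriv_sub_le {φ φ' : ℝ → ℝ} {M : ℝ}
    (hφ : ∀ t, HasDerivAt φ (φ' t) t) (hφ' : ∀ t ∈ Set.Ioo (0 : ℝ) 1, φ' t - φ' 0 ≤ M * t) :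
    φ 1 ≤ φ 0 + φ' 0 + M / 2 := by
  set h : ℝ → ℝ := fun t ↦ φ t - t * φ' 0 - M / 2 * t ^ 2
  have hh : ∀ t, HasDerivAt h (φ' t - φ' 0 - M * t) t := fun t ↦ by
    refine (((hφ t).sub ((hasDerivAt_id' t).mul_const (φ' 0))).sub
      ((hasDerivAt_pow 2 t).const_mul (M / 2))).congr_deriv ?_
    push_cast; ring
  have hanti : AntitoneOn h (Set.Icc 0 1) := by
    refine antitoneOn_of_hasDerivWithinAt_nonpos (convex_Icc 0 1)
      (fun t _ ↦ (hh t).continuousAt.continuousWithinAt)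
      (fun t _ ↦ (hh t).hasDerivWithinAt) fun t ht ↦ ?_
    rw [interior_Icc] at ht
    linarith [hφ' t ht]
  have := hanti (by simp) (by simp) zero_le_one
  simp only [h] at this
  linarith

theorem apply_le_add_inner_add_of_lipschitzWith_gradient {E : Type*}
    [NormedAddCommGroup E] [InnerProductSpace ℝ E] [CompleteSpace E]
    {f : E → ℝ} {f' : E → E} {L : ℝ} (hf : ∀ x, HasGradientAt f (f' x) x)
    (hL : 0 ≤ L) (hlip : LipschitzWith L.toNNReal f') (x y : E) :
    f x ≤ f y + ⟪f' y, x - y⟫ + L / 2 * ‖x - y‖ ^ 2 := by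
  set v := x - y
  have hline : ∀ t : ℝ, HasDerivAt (fun s : ℝ ↦ f (y + s • v)) ⟪f' (y + t • v), v⟫ t := by
    intro t
    have hpath : HasDerivAt (fun s : ℝ ↦ y + s • v) v t := by
      simpa using ((hasDerivAt_id t).smul_const v).const_add y
    simpa [Function.comp_def] using (hf (y + t • v)).hasFDerivAt.comp_hasDerivAt t hpath
  have hslope : ∀ t ∈ Set.Ioo (0 : ℝ) 1,
      ⟪f' (y + t • v), v⟫ - ⟪f' (y + (0 : ℝ) • v), v⟫ ≤ L * ‖v‖ ^ 2 * t := by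
    intro t ht
    have hdist : ‖f' (y + t • v) - f' y‖ ≤ L * (t * ‖v‖) := by
      simpa [dist_eq_norm, norm_smul, abs_of_pos ht.1, Real.coe_toNNReal L hL]
        using hlip.dist_le_mul (y + t • v) y
    calc ⟪f' (y + t • v), v⟫ - ⟪f' (y + (0 : ℝ) • v), v⟫
        = ⟪f' (y + t • v) - f' y, v⟫ := by rw [zero_smul, add_zero, inner_sub_left]
      _ ≤ ‖f' (y + t • v) - f' y‖ * ‖v‖ := real_inner_le_norm _ _
      _ ≤ L * (t * ‖v‖) * ‖v‖ := by gcongr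
      _ = L * ‖v‖ ^ 2 * t := by ring
  have := le_add_deriv_add_half_of_deriv_sub_le hline hslope
  simp only [zero_smul, add_zero, one_smul, v, add_sub_cancel] at this
  linarith

theorem stmt17_general {p : ℕ}
    (f ψ : EuclideanSpace ℝ (Fin p) → ℝ)
    (f' : EuclideanSpace ℝ (Fin p) → EuclideanSpace ℝ (Fin p))
    (L η : ℝ) (y xplus ψ'v : EuclideanSpace ℝ (Fin p))
    (hf : ∀ x, HasGradientAt f (f' x) x)
    (hL0 : 0 ≤ L) (hlip : LipschitzWith L.toNNReal f')
    (hη : 0 < η)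
    (gt : EuclideanSpace ℝ (Fin p)) (hgt : gt = (1 / η) • (y - xplus))
    (hψ'def : ψ'v = gt - f' y) :
    f xplus + ψ xplus
      ≤ f y + ⟪gt - ψ'v, xplus - y⟫ + L / 2 * ‖xplus - y‖ ^ 2 + ψ xplus ∧
    f y + ⟪gt - ψ'v, xplus - y⟫ + L / 2 * ‖xplus - y‖ ^ 2 + ψ xplus
      ≤ (f y + ψ xplus + ⟪ψ'v, y - xplus⟫) + (L * η ^ 2 / 2 - η) * ‖gt‖ ^ 2 := by
  have hgrad : gt - ψ'v = f' y := by rw [hψ'def, sub_sub_cancel]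
  have hstep : y - xplus = η • gt := by
    rw [hgt, smul_smul, mul_one_div_cancel hη.ne', one_smul]
  refine ⟨?_, le_of_eq ?_⟩
  · rw [hgrad]
    linarith [apply_le_add_inner_add_of_lipschitzWith_gradient hf hL0 hlip xplus y]
  · rw [hgrad, hψ'def, ← neg_sub, hstep, inner_neg_right, real_inner_smul_right,
      real_inner_smul_right, inner_sub_left, real_inner_self_eq_norm_sq, real_inner_comm,
      norm_neg, norm_smul, mul_pow, Real.norm_eq_abs, sq_abs]
    ring

theorem stmt17 {p : ℕ}
    (f ψ : EuclideanSpace ℝ (Fin p) → ℝ)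
    (f' : EuclideanSpace ℝ (Fin p) → EuclideanSpace ℝ (Fin p))
    (L η : ℝ) (y xplus ψ'v : EuclideanSpace ℝ (Fin p))
    (hf : ∀ x, HasGradientAt f (f' x) x)
    (hL0 : 0 ≤ L) (hlip : LipschitzWith L.toNNReal f')
    (hconv : ConvexOn ℝ Set.univ f) (hψ : ConvexOn ℝ Set.univ ψ)
    (hη : 0 < η) (hηL : η ≤ 1 / L)
    (hprox : ∀ z, η * ψ xplus + ‖xplus - (y - η • f' y)‖ ^ 2 / 2
        ≤ η * ψ z + ‖z - (y - η • f' y)‖ ^ 2 / 2)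
    (gt : EuclideanSpace ℝ (Fin p)) (hgt : gt = (1 / η) • (y - xplus))
    (hψ'def : ψ'v = gt - f' y)
    (hψ'sub : ∀ z, ψ xplus + ⟪ψ'v, z - xplus⟫ ≤ ψ z) :
    f xplus + ψ xplus
      ≤ f y + ⟪gt - ψ'v, xplus - y⟫ + L / 2 * ‖xplus - y‖ ^ 2 + ψ xplus ∧
    f y + ⟪gt - ψ'v, xplus - y⟫ + L / 2 * ‖xplus - y‖ ^ 2 + ψ xplus
      ≤ (f y + ψ xplus + ⟪ψ'v, y - xplus⟫) + (L * η ^ 2 / 2 - η) * ‖gt‖ ^ 2 :=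
  stmt17_general f ψ f' L η y xplus ψ'v hf hL0 hlip hη gt hgt hψ'def
end
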